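/- The space Y = (ω₁ × ω) ∪ {(ω₁, ω)}, as a subspace of the product (ω₁+1) × (ω+1) of ordinal spaces, is not L-selective: the map φ defined by φ(ω) = {(ω₁, ω)} and φ(n) = ω₁ × {n} for n ∈ ω is lower semicontinuous and closed-valued from ω+1 into Y but has no continuous selection. Consequently, C-selectivity is not hereditary, since (ω₁+1)×(ω+1) is C-selective. -/

import Mathlib

open Topology Filter Set

/-- A set-valued mapping is lower semicontinuous if the preimage of every open set is open. -/
def IsLSC {Y X : Type*} [TopologicalSpace Y] [TopologicalSpace X] (φ : Y → Set X) : Prop :=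
  ∀ U : Set X, IsOpen U → IsOpen {y | (φ y ∩ U).Nonempty}

/-- `X` is `Y`-selective: every l.s.c. closed-valued mapping from `Y` to `X` has a
continuous selection. -/
def Selective (Y X : Type*) [TopologicalSpace Y] [TopologicalSpace X] : Prop :=
  ∀ φ : Y → Set X, (∀ y, (φ y).Nonempty) → (∀ y, IsClosed (φ y)) → IsLSC φ →
    ∃ f : Y → X, Continuous f ∧ ∀ y, f y ∈ φ y

/-- `X` is strongly `Y`-selective: every l.s.c. mapping from `Y` to the nonempty subsets
of `X` has a continuous selection. -/
def StronglySelective (Y X : Type*) [TopologicalSpace Y] [TopologicalSpace X] : Prop :=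
  ∀ φ : Y → Set X, (∀ y, (φ y).Nonempty) → IsLSC φ →
    ∃ f : Y → X, Continuous f ∧ ∀ y, f y ∈ φ y


noncomputable section

/-- `ω₁` as an ordinal. -/
noncomputable def omega1 : Ordinal := (Cardinal.aleph 1).ord

/-- The ordinal space `ω₁ + 1`, realized as the subspace `Iic ω₁` of the ordinals; the
ordinal space `ω + 1` is realized as `ℕ∞`. -/
abbrev O1 := ↥(Set.Iic omega1)

/-- The subspace `Y = (ω₁ × ω) ∪ {(ω₁, ω)}` of `(ω₁+1) × (ω+1)`. -/
def YSub : Set (O1 × ℕ∞) :=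
  {p | ((p.1 : Ordinal) < omega1 ∧ p.2 ≠ ⊤) ∨ ((p.1 : Ordinal) = omega1 ∧ p.2 = ⊤)}

/-- The mapping with `φ(ω) = {(ω₁, ω)}` and `φ(n) = ω₁ × {n}`. -/
def phi15 (k : ℕ∞) : Set YSub := {p | (p : O1 × ℕ∞).2 = k}


set_option linter.unusedSectionVars false

lemma countable_Iic_of_lt_omega1 {b : Ordinal} (hb : b < omega1) : (Set.Iic b).Countable := by
  have h1 : Order.succ b < omega1 := (Cardinal.isSuccLimit_ord (Cardinal.aleph0_le_aleph 1)).succ_lt hb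
  have h2 : (Order.succ b).card < Cardinal.aleph 1 := Cardinal.lt_ord.mp h1
  have h3 : (Order.succ b).card ≤ Cardinal.aleph0 := by
    rwa [← Cardinal.succ_aleph0, Order.lt_succ_iff] at h2
  rw [← Order.Iio_succ, ← Set.countable_coe_iff, ← Cardinal.mk_le_aleph0_iff,
    Ordinal.mk_Iio_ordinal]
  exact le_trans (Cardinal.lift_le.mpr h3) (by simp)

lemma clopen_basis_ct {C : Type} [TopologicalSpace C] [Countable C] [T3Space C]
    {y : C} {U : Set C} (hU : IsOpen U) (hy : y ∈ U) :
    ∃ V : Set C, IsClopen V ∧ y ∈ V ∧ V ⊆ U := by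
  obtain ⟨f, hf0, hf1, _⟩ := exists_continuous_zero_one_of_isClosed
    (isClosed_singleton (x := y)) hU.isClosed_compl
    (by simp [Set.disjoint_singleton_left, hy])
  have hrange : (Set.range f).Countable := Set.countable_range f
  have : ∃ r ∈ Set.Ioo (0:ℝ) 1, r ∉ Set.range f := by
    by_contra h
    push_neg at h
    have hsub : Set.Ioo (0:ℝ) 1 ⊆ Set.range f := fun r hr => h r hr
    have hc : (Set.Ioo (0:ℝ) 1).Countable := hrange.mono hsub
    have := hc.le_aleph0
    rw [Cardinal.mk_Ioo_real (by norm_num : (0:ℝ) < 1)] at this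
    exact Cardinal.aleph0_lt_continuum.not_ge this
  obtain ⟨r, ⟨hr0, hr1⟩, hrne⟩ := this
  refine ⟨f ⁻¹' Set.Iio r, ⟨?_, f.continuous.isOpen_preimage _ isOpen_Iio⟩, ?_, ?_⟩
  · have : f ⁻¹' Set.Iio r = f ⁻¹' Set.Iic r := by
      ext x
      simp only [Set.mem_preimage, Set.mem_Iio, Set.mem_Iic]
      constructor
      · exact le_of_lt
      · intro h
        rcases lt_or_eq_of_le h with h' | h'
        · exact h'
        · exact absurd ⟨x, h'⟩ hrne
    rw [this]
    exact IsClosed.preimage f.continuous isClosed_Iic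
  · simp only [Set.mem_preimage, Set.mem_Iio]
    rw [hf0 rfl]
    exact hr0
  · intro x hx
    by_contra hxU
    have := hf1 hxU
    simp only [Set.mem_preimage, Set.mem_Iio] at hx
    rw [this] at hx
    norm_num at hx
    exact absurd (hx.trans hr1) (lt_irrefl 1)

section Michael
variable {C : Type} [TopologicalSpace C] [Countable C] [T3Space C]
  {W : Type*} [TopologicalSpace W] [Countable W] [CompactSpace W]
  (φ : C → Set W)

/-- invariant for the recursion -/
def MGood (φ : C → Set W) (σ : C → Set W) : Prop :=
  (∀ y, IsOpen (σ y)) ∧ (∀ y, (φ y ∩ σ y).Nonempty) ∧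
  (∀ y, ∃ V : Set C, IsClopen V ∧ y ∈ V ∧ ∀ y' ∈ V, σ y' = σ y)

lemma mstep [Nonempty C] (hlsc : IsLSC φ) (σ : C → Set W) (hσ : MGood φ σ)
    (H : Set W) (hH : IsClopen H) :
    ∃ σ', MGood φ σ' ∧ ∀ y, σ' y ⊆ σ y ∧ (σ' y ⊆ H ∨ σ' y ⊆ Hᶜ) := by
  classical
  obtain ⟨e, he⟩ := exists_surjective_nat C
  obtain ⟨hopen, hmeet, hloc⟩ := hσ
  -- choose a point of φ y ∩ σ y
  have hz : ∀ y, ∃ z, z ∈ φ y ∧ z ∈ σ y := fun y => (hmeet y)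
  let z : C → W := fun y => (hz y).choose
  have hz1 : ∀ y, z y ∈ φ y := fun y => (hz y).choose_spec.1
  have hz2 : ∀ y, z y ∈ σ y := fun y => (hz y).choose_spec.2
  let Q : C → Set W := fun y => σ y ∩ (if z y ∈ H then H else Hᶜ)
  have hQopen : ∀ y, IsOpen (Q y) := fun y => by
    by_cases h : z y ∈ H <;> simp only [Q, h, if_true, if_false] <;>
      [exact (hopen y).inter hH.isOpen; exact (hopen y).inter hH.compl.isOpen]
  have hQz : ∀ y, z y ∈ Q y := fun y => by
    by_cases h : z y ∈ H <;> simp only [Q, h, if_true, if_false] <;>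
      [exact ⟨hz2 y, h⟩; exact ⟨hz2 y, h⟩]
  have hQsub : ∀ y, Q y ⊆ σ y := fun y => Set.inter_subset_left
  have hQside : ∀ y, Q y ⊆ H ∨ Q y ⊆ Hᶜ := fun y => by
    by_cases h : z y ∈ H
    · left; simp only [Q, h, if_true]; exact Set.inter_subset_right
    · right; simp only [Q, h, if_false]; exact Set.inter_subset_right
  -- locally constant witness
  let Vl : C → Set C := fun y => (hloc y).choose
  have hVl : ∀ y, IsClopen (Vl y) ∧ y ∈ Vl y ∧ ∀ y' ∈ Vl y, σ y' = σ y :=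
    fun y => (hloc y).choose_spec
  let O : C → Set C := fun y => Vl y ∩ {y' | (φ y' ∩ Q y).Nonempty}
  have hOopen : ∀ y, IsOpen (O y) := fun y =>
    (hVl y).1.isOpen.inter (hlsc _ (hQopen y))
  have hyO : ∀ y, y ∈ O y := fun y => ⟨(hVl y).2.1, ⟨z y, hz1 y, hQz y⟩⟩
  let P : C → Set C := fun y => (clopen_basis_ct (hOopen y) (hyO y)).choose
  have hP : ∀ y, IsClopen (P y) ∧ y ∈ P y ∧ P y ⊆ O y :=
    fun y => (clopen_basis_ct (hOopen y) (hyO y)).choose_spec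
  have hcov : ∀ y', ∃ n, y' ∈ P (e n) := by
    intro y'
    obtain ⟨n, hn⟩ := he y'
    exact ⟨n, by rw [hn]; exact (hP y').2.1⟩
  let ν : C → ℕ := fun y' => Nat.find (hcov y')
  have hν1 : ∀ y', y' ∈ P (e (ν y')) := fun y' => Nat.find_spec (hcov y')
  have hν2 : ∀ y' m, m < ν y' → y' ∉ P (e m) := fun y' m hm => Nat.find_min (hcov y') hm
  refine ⟨fun y' => Q (e (ν y')), ⟨fun y' => hQopen _, ?_, ?_⟩, ?_⟩
  · intro y'
    exact ((hP (e (ν y'))).2.2 (hν1 y')).2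
  · -- locally constant: use R y'
    intro y'
    refine ⟨P (e (ν y')) \ ⋃ m ∈ Finset.range (ν y'), P (e m), ?_, ⟨hν1 y', ?_⟩, ?_⟩
    · refine ((hP _).1).diff ?_
      exact Set.Finite.isClopen_biUnion (Finset.finite_toSet _) (fun m _ => (hP (e m)).1)
    · simp only [Set.mem_iUnion, Finset.mem_range, not_exists]
      intro m hm
      exact fun h => hν2 y' m hm h
    · intro y'' hy''
      have h1 : y'' ∈ P (e (ν y')) := hy''.1
      have h2 : ∀ m < ν y', y'' ∉ P (e m) := by
        intro m hm
        have := hy''.2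
        simp only [Set.mem_iUnion, Finset.mem_range, not_exists] at this
        exact this m hm
      have : ν y'' = ν y' := by
        apply le_antisymm
        · exact Nat.find_le h1
        · by_contra h
          push_neg at h
          exact h2 _ h (hν1 y'')
      show Q (e (ν y'')) = Q (e (ν y'))
      rw [this]
  · intro y'
    constructor
    · have hy'O : y' ∈ O (e (ν y')) := (hP _).2.2 (hν1 y')
      have : σ y' = σ (e (ν y')) := (hVl _).2.2 y' hy'O.1
      rw [this]
      exact hQsub _
    · exact hQside _
end Michael

lemma michael {C : Type} [TopologicalSpace C] [Countable C] [T3Space C]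
    {W : Type*} [TopologicalSpace W] [Countable W] [CompactSpace W]
    (sep : ∀ x x' : W, x ≠ x' → ∃ H : Set W, IsClopen H ∧ x ∈ H ∧ x' ∉ H)
    (φ : C → Set W) (hne : ∀ y, (φ y).Nonempty) (hcl : ∀ y, IsClosed (φ y))
    (hlsc : IsLSC φ) : ∃ f : C → W, Continuous f ∧ ∀ y, f y ∈ φ y := by
  classical
  rcases isEmpty_or_nonempty C with hC | hC
  · refine ⟨fun y => isEmptyElim y, ⟨?_, fun y => isEmptyElim y⟩⟩
    rw [continuous_def]
    intro s _
    rw [Set.eq_empty_of_isEmpty (_ ⁻¹' s)]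
    exact isOpen_empty
  have hWne : Nonempty W := ⟨(hne (Classical.arbitrary C)).choose⟩
  obtain ⟨w, hw⟩ := exists_surjective_nat W
  -- separating clopen sets
  let H : ℕ → Set W := fun k =>
    if h : w (Nat.unpair k).1 ≠ w (Nat.unpair k).2 then (sep _ _ h).choose else Set.univ
  have hHclopen : ∀ k, IsClopen (H k) := by
    intro k
    by_cases h : w (Nat.unpair k).1 ≠ w (Nat.unpair k).2
    · simp only [H, dif_pos h]; exact (sep _ _ h).choose_spec.1
    · simp only [H, dif_neg h]; exact isClopen_univ
  have hHsep : ∀ i j (h : w i ≠ w j),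
      w i ∈ H (Nat.pair i j) ∧ w j ∉ H (Nat.pair i j) := by
    intro i j h
    have hu : (Nat.unpair (Nat.pair i j)) = (i, j) := Nat.unpair_pair i j
    simp only [H, hu, dif_pos h]
    exact ⟨(sep _ _ h).choose_spec.2.1, (sep _ _ h).choose_spec.2.2⟩
  -- the recursion
  let step : ℕ → {σ : C → Set W // MGood φ σ} → {σ : C → Set W // MGood φ σ} :=
    fun k p => ⟨(mstep φ hlsc p.1 p.2 (H k) (hHclopen k)).choose,
      (mstep φ hlsc p.1 p.2 (H k) (hHclopen k)).choose_spec.1⟩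
  have hstep : ∀ k p, ∀ y, (step k p).1 y ⊆ p.1 y ∧
      ((step k p).1 y ⊆ H k ∨ (step k p).1 y ⊆ (H k)ᶜ) :=
    fun k p => (mstep φ hlsc p.1 p.2 (H k) (hHclopen k)).choose_spec.2
  have hbase : MGood φ (fun _ => (Set.univ : Set W)) :=
    ⟨fun _ => isOpen_univ, fun y => by simpa using hne y,
     fun y => ⟨Set.univ, isClopen_univ, Set.mem_univ y, fun _ _ => rfl⟩⟩
  let T : ℕ → {σ : C → Set W // MGood φ σ} :=
    fun k => Nat.rec ⟨fun _ => Set.univ, hbase⟩ step k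
  let σ : ℕ → C → Set W := fun k => (T k).1
  have hTsucc : ∀ k, T (k+1) = step k (T k) := fun k => rfl
  have hmono : ∀ k y, σ (k+1) y ⊆ σ k y := fun k y => (hstep k (T k) y).1
  have hside : ∀ k y, σ (k+1) y ⊆ H k ∨ σ (k+1) y ⊆ (H k)ᶜ := fun k y => (hstep k (T k) y).2
  have hGood : ∀ k, MGood φ (σ k) := fun k => (T k).2
  -- the nested compact sets
  let F : ℕ → C → Set W := fun k y => φ y ∩ closure (σ k y)
  have hFne : ∀ k y, (F k y).Nonempty := by
    intro k y
    obtain ⟨x, hx1, hx2⟩ := (hGood k).2.1 y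
    exact ⟨x, hx1, subset_closure hx2⟩
  have hFcl : ∀ k y, IsClosed (F k y) := fun k y => (hcl y).inter isClosed_closure
  have hFmono : ∀ k y, F (k+1) y ⊆ F k y := fun k y =>
    Set.inter_subset_inter_right _ (closure_mono (hmono k y))
  have hInter : ∀ y, (⋂ k, F k y).Nonempty := by
    intro y
    exact IsCompact.nonempty_iInter_of_sequence_nonempty_isCompact_isClosed
      (fun k => F k y) (fun k => hFmono k y) (fun k => hFne k y)
      ((hFcl 0 y).isCompact) (fun k => hFcl k y)
  let f : C → W := fun y => (hInter y).choose
  have hf : ∀ y, ∀ k, f y ∈ F k y := by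
    intro y k
    have := (hInter y).choose_spec
    simp only [Set.mem_iInter] at this
    exact this k
  have hfφ : ∀ y, f y ∈ φ y := fun y => (hf y 0).1
  -- uniqueness
  have huniq : ∀ y x, (∀ k, x ∈ closure (σ k y)) → x = f y := by
    intro y x hx
    by_contra hne'
    obtain ⟨i, hi⟩ := hw x
    obtain ⟨j, hj⟩ := hw (f y)
    have hij : w i ≠ w j := by rw [hi, hj]; exact hne'
    obtain ⟨hwi, hwj⟩ := hHsep i j hij
    set k := Nat.pair i j
    have hclos : closure (σ (k+1) y) ⊆ H k ∨ closure (σ (k+1) y) ⊆ (H k)ᶜ := by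
      rcases hside k y with h | h
      · left; rw [← (hHclopen k).isClosed.closure_eq]; exact closure_mono h
      · right; rw [← (hHclopen k).compl.isClosed.closure_eq]; exact closure_mono h
    have hx' : x ∈ closure (σ (k+1) y) := hx (k+1)
    have hfy' : f y ∈ closure (σ (k+1) y) := (hf y (k+1)).2
    rcases hclos with h | h
    · exact hwj (hj ▸ h hfy')
    · exact (h hx') (hi ▸ hwi)
  -- continuity
  refine ⟨f, ?_, hfφ⟩
  rw [continuous_iff_continuousAt]
  intro y
  intro U hU
  rw [Filter.mem_map]
  obtain ⟨U', hU'sub, hU'open, hfyU'⟩ := mem_nhds_iff.mp hU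
  -- find k with closure (σ k y) ⊆ U'
  have hk : ∃ k, closure (σ k y) ⊆ U' := by
    by_contra h
    push_neg at h
    have hGne : ∀ k, (closure (σ k y) ∩ U'ᶜ).Nonempty := by
      intro k
      obtain ⟨x, hx, hxU⟩ := Set.not_subset.mp (h k)
      exact ⟨x, hx, hxU⟩
    have := IsCompact.nonempty_iInter_of_sequence_nonempty_isCompact_isClosed
      (fun k => closure (σ k y) ∩ U'ᶜ)
      (fun k => Set.inter_subset_inter_left _ (closure_mono (hmono k y)))
      hGne ((isClosed_closure.inter hU'open.isClosed_compl).isCompact)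
      (fun k => isClosed_closure.inter hU'open.isClosed_compl)
    obtain ⟨x, hx⟩ := this
    simp only [Set.mem_iInter, Set.mem_inter_iff] at hx
    have : x = f y := huniq y x (fun k => (hx k).1)
    exact (hx 0).2 (this ▸ hfyU')
  obtain ⟨k, hk⟩ := hk
  obtain ⟨V, hVclopen, hyV, hVconst⟩ := (hGood k).2.2 y
  apply Filter.mem_of_superset (hVclopen.isOpen.mem_nhds hyV)
  intro y' hy'
  apply hU'sub
  apply hk
  have : f y' ∈ closure (σ k y') := (hf y' k).2
  rwa [hVconst y' hy'] at this

-- basic facts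
lemma omega1_isLimit : Order.IsSuccLimit omega1 := Cardinal.isSuccLimit_ord (Cardinal.aleph0_le_aleph 1)
lemma omega1_pos : 0 < omega1 := omega1_isLimit.pos

instance : CompactSpace O1 := by
  rw [← isCompact_iff_compactSpace, ← Set.Icc_bot]
  exact isCompact_Icc

instance : CompactSpace (O1 × ℕ∞) := inferInstance
example : T2Space (O1 × ℕ∞) := inferInstance

/-- top point of O1 -/
def t1 : O1 := ⟨omega1, Set.self_mem_Iic⟩

lemma isClopen_O1_Iic (b : Ordinal) : IsClopen {a : O1 | (a : Ordinal) ≤ b} := by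
  have h : {a : O1 | (a : Ordinal) ≤ b} = (Subtype.val) ⁻¹' (Set.Iic b) := rfl
  rw [h]
  refine ⟨isClosed_Iic.preimage continuous_subtype_val, ?_⟩
  have h2 : (Subtype.val : O1 → Ordinal) ⁻¹' (Set.Iic b) = Subtype.val ⁻¹' (Set.Iio (Order.succ b)) := by
    rw [Order.Iio_succ]
  rw [h2]
  exact isOpen_Iio.preimage continuous_subtype_val

lemma isClopen_ENat_Iic (n : ℕ) : IsClopen (Set.Iic (n : ℕ∞)) := ⟨isClosed_Iic, by
  have : Set.Iic (n:ℕ∞) = Set.Iio ((n+1 : ℕ) : ℕ∞) := by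
    ext m
    simp only [Set.mem_Iic, Set.mem_Iio, Nat.cast_add, Nat.cast_one]
    exact (ENat.lt_add_one_iff (by simp)).symm
  rw [this]; exact isOpen_Iio⟩

theorem part2 (C : Type) [TopologicalSpace C] [Countable C] [T3Space C] :
    Selective C (O1 × ℕ∞) := by
  classical
  intro φ hne hcl hlsc
  -- values are compact
  have hφcomp : ∀ y, IsCompact (φ y) := fun y => (hcl y).isCompact
  -- Step 1: the bound β
  have key : ∃ β : Ordinal, β < omega1 ∧
      ∀ y (p : O1 × ℕ∞), p ∈ φ y → β < (p.1 : Ordinal) → (t1, p.2) ∈ φ y := by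
    let Tset : C → ℕ∞ → Set Ordinal := fun y n =>
      (fun p : O1 × ℕ∞ => (p.1 : Ordinal)) '' (φ y ∩ {p | p.2 = n})
    have hTcomp : ∀ y n, IsCompact (Tset y n) := by
      intro y n
      apply IsCompact.image
      · exact ((hcl y).inter (isClosed_singleton.preimage continuous_snd)).isCompact
      · exact continuous_subtype_val.comp continuous_fst
    have hTbdd : ∀ y n, BddAbove (Tset y n) := by
      intro y n
      refine ⟨omega1, ?_⟩
      rintro a ⟨p, _, rfl⟩
      exact p.1.2
    let g : C × ℕ∞ → Ordinal := fun yn =>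
      if (t1, yn.2) ∈ φ yn.1 then 0 else sSup (Tset yn.1 yn.2)
    have hg : ∀ yn, g yn < omega1 := by
      rintro ⟨y, n⟩
      by_cases h : (t1, n) ∈ φ y
      · show (if (t1, n) ∈ φ y then (0:Ordinal) else sSup (Tset y n)) < omega1
        rw [if_pos h]; exact omega1_pos
      · show (if (t1, n) ∈ φ y then (0:Ordinal) else sSup (Tset y n)) < omega1
        rw [if_neg h]
        rcases Set.eq_empty_or_nonempty (Tset y n) with he | hne'
        · rw [he, csSup_empty]
          exact omega1_pos
        · have hmem := (hTcomp y n).sSup_mem hne'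
          obtain ⟨p, hp, hpv⟩ := hmem
          rcases lt_or_eq_of_le (Set.mem_Iic.mp p.1.2) with h' | h'
          · rwa [← hpv]
          · exfalso
            apply h
            have hp1 : p.1 = t1 := Subtype.ext h'
            have : p = (t1, n) := by
              rw [Prod.ext_iff]
              exact ⟨hp1, hp.2⟩
            rw [← this]
            exact hp.1
    obtain ⟨β, hβ⟩ : ∃ β, β = iSup g := ⟨_, rfl⟩
    refine ⟨β, ?_, ?_⟩
    · rw [hβ]
      have h := Ordinal.iSup_lt_omega_one (f := g) (by simpa [omega1] using hg); simpa [omega1] using h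
    · intro y p hp hβp
      by_contra hmem
      have h1 : (p.1 : Ordinal) ∈ Tset y p.2 := ⟨p, ⟨hp, rfl⟩, rfl⟩
      have h2 : (p.1 : Ordinal) ≤ g (y, p.2) := by
        show (p.1 : Ordinal) ≤ (if (t1, p.2) ∈ φ y then (0:Ordinal) else sSup (Tset y p.2))
        rw [if_neg hmem]
        exact le_csSup (hTbdd y p.2) h1
      have h3 : g (y, p.2) ≤ β := by
        rw [hβ]
        exact le_ciSup (Ordinal.bddAbove_range g) (y, p.2)
      exact absurd (h2.trans h3) (not_le.mpr hβp)
  obtain ⟨β, hβlt, hβ⟩ := key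
  -- Step 2: the retraction
  let r : O1 → O1 := fun a => if (a : Ordinal) ≤ β then a else t1
  have hrcont : Continuous r := by
    apply continuous_if
    · intro a ha
      rw [(isClopen_O1_Iic β).frontier_eq] at ha
      exact absurd ha (Set.notMem_empty a)
    · exact continuous_id.continuousOn
    · exact continuous_const.continuousOn
  let ρ : O1 × ℕ∞ → O1 × ℕ∞ := fun p => (r p.1, p.2)
  have hρcont : Continuous ρ := (hrcont.comp continuous_fst).prodMk continuous_snd
  -- the countable compact subspace
  let A : Set (O1 × ℕ∞) := {p | (p.1 : Ordinal) ≤ β ∨ p.1 = t1}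
  have hρA : ∀ p, ρ p ∈ A := by
    intro p
    by_cases h : (p.1 : Ordinal) ≤ β
    · have hr : r p.1 = p.1 := if_pos h
      exact Or.inl (by show ((r p.1 : O1) : Ordinal) ≤ β; rw [hr]; exact h)
    · exact Or.inr (if_neg h)
  have hAcl : IsClosed A := by
    have : A = (fun p : O1 × ℕ∞ => p.1) ⁻¹' ({a : O1 | (a : Ordinal) ≤ β} ∪ {t1}) := by
      ext p
      simp only [A, Set.mem_preimage, Set.mem_union, Set.mem_setOf_eq, Set.mem_singleton_iff]
    rw [this]
    exact (((isClopen_O1_Iic β).isClosed).union isClosed_singleton).preimage continuous_fst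
  haveI : CompactSpace ↥A := isCompact_iff_compactSpace.mp (hAcl.isCompact)
  haveI : Countable ↥A := by
    rw [Set.countable_coe_iff]
    have hA1 : ({a : O1 | (a : Ordinal) ≤ β} : Set O1).Countable := by
      exact (countable_Iic_of_lt_omega1 hβlt).preimage Subtype.val_injective
    have : A ⊆ ({a : O1 | (a : Ordinal) ≤ β} ∪ {t1}) ×ˢ (Set.univ : Set ℕ∞) := by
      rintro p (h | h)
      · exact ⟨Or.inl h, Set.mem_univ _⟩
      · exact ⟨Or.inr h, Set.mem_univ _⟩
    exact Set.Countable.mono this ((hA1.union (Set.countable_singleton _)).prod Set.countable_univ)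
  -- separation in A
  have sepF : ∀ p q : O1 × ℕ∞, p ≠ q → ∃ H : Set (O1 × ℕ∞), IsClopen H ∧ p ∈ H ∧ q ∉ H := by
    have sep1 : ∀ a b : O1, a < b → ∃ K : Set O1, IsClopen K ∧ a ∈ K ∧ b ∉ K := by
      intro a b h
      exact ⟨{c : O1 | (c : Ordinal) ≤ (a : Ordinal)}, isClopen_O1_Iic _, (by exact le_refl (a:Ordinal)),
        not_le.mpr (Subtype.coe_lt_coe.mpr h)⟩
    have sep2 : ∀ a b : ℕ∞, a < b → ∃ K : Set ℕ∞, IsClopen K ∧ a ∈ K ∧ b ∉ K := by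
      intro a b h
      cases a with
      | top => exact absurd h (by simp)
      | coe n => exact ⟨Set.Iic (n : ℕ∞), isClopen_ENat_Iic n, Set.mem_Iic.mpr le_rfl, not_le.mpr h⟩
    intro p q hpq
    by_cases h1 : p.1 = q.1
    · have h2 : p.2 ≠ q.2 := fun h => hpq (Prod.ext h1 h)
      rcases lt_or_gt_of_ne h2 with h3 | h3
      · obtain ⟨K, hK, haK, hbK⟩ := sep2 _ _ h3
        exact ⟨(fun p : O1 × ℕ∞ => p.2) ⁻¹' K, hK.preimage continuous_snd, haK, hbK⟩
      · obtain ⟨K, hK, haK, hbK⟩ := sep2 _ _ h3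
        exact ⟨((fun p : O1 × ℕ∞ => p.2) ⁻¹' K)ᶜ, (hK.preimage continuous_snd).compl,
          hbK, fun hc => hc haK⟩
    · rcases lt_or_gt_of_ne h1 with h3 | h3
      · obtain ⟨K, hK, haK, hbK⟩ := sep1 _ _ h3
        exact ⟨(fun p : O1 × ℕ∞ => p.1) ⁻¹' K, hK.preimage continuous_fst, haK, hbK⟩
      · obtain ⟨K, hK, haK, hbK⟩ := sep1 _ _ h3
        exact ⟨((fun p : O1 × ℕ∞ => p.1) ⁻¹' K)ᶜ, (hK.preimage continuous_fst).compl,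
          hbK, fun hc => hc haK⟩
  have hsep : ∀ x x' : ↥A, x ≠ x' → ∃ H : Set ↥A, IsClopen H ∧ x ∈ H ∧ x' ∉ H := by
    intro x x' hxx
    have hvne : (x : O1 × ℕ∞) ≠ (x' : O1 × ℕ∞) := fun h => hxx (Subtype.ext h)
    obtain ⟨H, hH, hx, hx'⟩ := sepF _ _ hvne
    exact ⟨Subtype.val ⁻¹' H, hH.preimage continuous_subtype_val, hx, hx'⟩
  -- the pushed-forward map
  let ψ : C → Set ↥A := fun y => Subtype.val ⁻¹' (ρ '' φ y)
  have hψne : ∀ y, (ψ y).Nonempty := by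
    intro y
    obtain ⟨p, hp⟩ := hne y
    exact ⟨⟨ρ p, hρA p⟩, ⟨p, hp, rfl⟩⟩
  have hψcl : ∀ y, IsClosed (ψ y) := by
    intro y
    exact (((hφcomp y).image hρcont).isClosed).preimage continuous_subtype_val
  have hψlsc : IsLSC ψ := by
    intro U hU
    obtain ⟨V, hVopen, hVU⟩ := isOpen_induced_iff.mp hU
    have heq : {y | (ψ y ∩ U).Nonempty} = {y | (φ y ∩ ρ ⁻¹' V).Nonempty} := by
      ext y
      constructor
      · rintro ⟨w, hw1, hw2⟩
        obtain ⟨p, hp, hpw⟩ := hw1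
        refine ⟨p, hp, ?_⟩
        have : (w : O1 × ℕ∞) ∈ V := by rw [← hVU] at hw2; exact hw2
        rw [Set.mem_preimage, hpw]
        exact this
      · rintro ⟨p, hp, hpV⟩
        refine ⟨⟨ρ p, hρA p⟩, ⟨p, hp, rfl⟩, ?_⟩
        rw [← hVU]
        exact hpV
    rw [heq]
    exact hlsc _ (hVopen.preimage hρcont)
  obtain ⟨h, hhcont, hhmem⟩ := michael hsep ψ hψne hψcl hψlsc
  refine ⟨fun y => (h y : O1 × ℕ∞), continuous_subtype_val.comp hhcont, ?_⟩
  intro y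
  show ((h y : O1 × ℕ∞)) ∈ φ y
  obtain ⟨p, hp, hpv⟩ := hhmem y
  by_cases hcase : (p.1 : Ordinal) ≤ β
  · have hr : r p.1 = p.1 := if_pos hcase
    have : ρ p = p := by
      show (r p.1, p.2) = p
      rw [hr]
    rw [← hpv, this]
    exact hp
  · have hr : r p.1 = t1 := if_neg hcase
    have hρp : ρ p = (t1, p.2) := by
      show (r p.1, p.2) = (t1, p.2)
      rw [hr]
    rw [← hpv, hρp]
    exact hβ y p hp (not_le.mp hcase)

lemma part1_ne : ∀ k, (phi15 k).Nonempty := by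
  intro k
  cases k with
  | top => exact ⟨⟨(t1, ⊤), Or.inr ⟨rfl, rfl⟩⟩, rfl⟩
  | coe n =>
    refine ⟨⟨(⟨0, Set.mem_Iic.mpr omega1_pos.le⟩, (n : ℕ∞)), Or.inl ⟨omega1_pos, by simp⟩⟩, rfl⟩

lemma part1_cl : ∀ k, IsClosed (phi15 k) := by
  intro k
  have : phi15 k = (fun p : ↥YSub => (p : O1 × ℕ∞).2) ⁻¹' {k} := rfl
  rw [this]
  exact isClosed_singleton.preimage (continuous_snd.comp continuous_subtype_val)

lemma top_mem_char (p : ↥YSub) (hp : (p : O1 × ℕ∞).2 = ⊤) : (p : O1 × ℕ∞) = (t1, ⊤) := by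
  rcases p.2 with ⟨_, h2⟩ | ⟨h1, _⟩
  · exact absurd hp h2
  · exact Prod.ext (Subtype.ext h1) hp

lemma part1_lsc : ∀ U : Set ↥YSub, IsOpen U → IsOpen {k | (phi15 k ∩ U).Nonempty} := by
  intro U hU
  set S := {k | (phi15 k ∩ U).Nonempty} with hS
  rw [isOpen_iff_mem_nhds]
  intro k hk
  by_cases hktop : k = ⊤
  · subst hktop
    -- the point (t1, ⊤) is in U
    obtain ⟨p, hp1, hp2⟩ := hk
    have hpval : (p : O1 × ℕ∞) = (t1, ⊤) := top_mem_char p hp1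
    obtain ⟨V, hVopen, hVU⟩ := isOpen_induced_iff.mp hU
    have hpV : ((t1, ⊤) : O1 × ℕ∞) ∈ V := by
      rw [← hpval]
      rw [← hVU] at hp2
      exact hp2
    obtain ⟨V₁, hV₁, V₂, hV₂, hV12⟩ := mem_nhds_prod_iff.mp (hVopen.mem_nhds hpV)
    -- neighborhood of t1 in O1
    rw [nhds_subtype_eq_comap] at hV₁
    obtain ⟨V₁', hV₁', hV₁'sub⟩ := Filter.mem_comap.mp hV₁
    obtain ⟨a, ha, hasub⟩ := exists_Ioc_subset_of_mem_nhds hV₁' ⟨0, omega1_pos⟩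
    obtain ⟨m, hm, hmsub⟩ := exists_Ioc_subset_of_mem_nhds hV₂ ⟨0, by simp⟩
    refine Filter.mem_of_superset (isOpen_Ioi.mem_nhds hm) ?_
    intro k' hk'
    cases k' with
    | top => exact ⟨p, hp1, hp2⟩
    | coe n =>
      have hsucc : Order.succ a < omega1 := omega1_isLimit.succ_lt ha
      have hq : Order.succ a ∈ Set.Iic omega1 := Set.mem_Iic.mpr hsucc.le
      refine ⟨⟨(⟨Order.succ a, hq⟩, (n : ℕ∞)), Or.inl ⟨hsucc, by simp⟩⟩, rfl, ?_⟩
      rw [← hVU]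
      apply hV12
      constructor
      · apply hV₁'sub
        exact hasub ⟨Order.lt_succ a, hsucc.le⟩
      · exact hmsub ⟨hk', le_top⟩
  · obtain ⟨n, rfl⟩ : ∃ n : ℕ, k = (n : ℕ∞) := by
      cases k with
      | top => exact absurd rfl hktop
      | coe n => exact ⟨n, rfl⟩
    exact Filter.mem_of_superset ((ENat.isOpen_singleton (by simp)).mem_nhds rfl)
      (Set.singleton_subset_iff.mpr hk)

lemma part1_nosel : ¬ ∃ f : ℕ∞ → ↥YSub, Continuous f ∧ ∀ k, f k ∈ phi15 k := by
  rintro ⟨f, hfc, hfm⟩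
  have h1 : ∀ n : ℕ, (((f n : O1 × ℕ∞)).1 : Ordinal) < omega1 := by
    intro n
    have hm : ((f n : O1 × ℕ∞)).2 = (n : ℕ∞) := hfm (n : ℕ∞)
    rcases (f n).2 with ⟨h, _⟩ | ⟨_, h2⟩
    · exact h
    · rw [hm] at h2
      exact absurd h2.symm (by simp)
  set s := iSup (fun n : ℕ => (((f n : O1 × ℕ∞)).1 : Ordinal)) with hs'
  have hs : s < omega1 := by
    rw [hs']; have h := Ordinal.iSup_lt_omega_one (by simpa [omega1] using h1); simpa [omega1] using h
  have htop : ((f ⊤ : O1 × ℕ∞)) = (t1, ⊤) := top_mem_char _ (hfm ⊤)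
  set G := {p : ↥YSub | s < ((p : O1 × ℕ∞).1 : Ordinal)} with hG
  have hGopen : IsOpen G := by
    have : G = (fun p : ↥YSub => ((p : O1 × ℕ∞).1 : Ordinal)) ⁻¹' (Set.Ioi s) := rfl
    rw [this]
    exact isOpen_Ioi.preimage
      (continuous_subtype_val.comp (continuous_fst.comp continuous_subtype_val))
  have hfG : f ⊤ ∈ G := by
    show s < ((f ⊤ : O1 × ℕ∞).1 : Ordinal)
    rw [htop]
    exact hs
  have hnb : f ⁻¹' G ∈ 𝓝 (⊤ : ℕ∞) :=
    hfc.continuousAt.preimage_mem_nhds (hGopen.mem_nhds hfG)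
  obtain ⟨m, hm, hmsub⟩ := exists_Ioc_subset_of_mem_nhds hnb ⟨0, by simp⟩
  obtain ⟨j, rfl⟩ : ∃ j : ℕ, m = (j : ℕ∞) := by
    cases m with
    | top => exact absurd hm (by simp)
    | coe j => exact ⟨j, rfl⟩
  have hmem : ((j+1 : ℕ) : ℕ∞) ∈ Set.Ioc ((j:ℕ) : ℕ∞) ⊤ :=
    ⟨by exact_mod_cast Nat.lt_succ_self j, le_top⟩
  have hG1 : s < ((f ((j+1 : ℕ) : ℕ∞) : O1 × ℕ∞).1 : Ordinal) := hmsub hmem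
  have hG2 : ((f ((j+1 : ℕ) : ℕ∞) : O1 × ℕ∞).1 : Ordinal) ≤ s :=
    le_ciSup (Ordinal.bddAbove_range _) (j+1)
  exact absurd (hG1.trans_le hG2) (lt_irrefl s)

/-- `Y` is not L-selective: `φ` is l.s.c. and closed-valued with nonempty values but
has no continuous selection; yet the ambient product `(ω₁+1) × (ω+1)` is
`C`-selective, so `C`-selectivity is not hereditary. -/
theorem stmt_15 :
    ((∀ k, (phi15 k).Nonempty) ∧ (∀ k, IsClosed (phi15 k)) ∧ IsLSC phi15 ∧
      ¬ ∃ f : ℕ∞ → YSub, Continuous f ∧ ∀ k, f k ∈ phi15 k) ∧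
    (∀ (C : Type) [TopologicalSpace C] [Countable C] [T3Space C],
      Selective C (O1 × ℕ∞)) := by
  exact ⟨⟨part1_ne, part1_cl, part1_lsc, part1_nosel⟩, fun C _ _ _ => part2 C⟩

end
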